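/- arXiv:2405.20945 — 6 statements merged into one kernel-verified Lean document; each statement's English description precedes it below -/
import Mathlib

section
/- Let N satisfy the boundary trichotomy. Then for every p ∈ N and every real number t with 0 < t < t°(p), the point p·t lies in the interior of N. -/
open Set
open scoped ENNReal

/-- Phase space `ℝ³`. -/
abbrev R3 := EuclideanSpace ℝ (Fin 3)

/-- `φ` is a continuous flow on `ℝ³`. -/
def IsFlow (φ : R3 → ℝ → R3) : Prop :=
  Continuous (fun q : R3 × ℝ => φ q.1 q.2) ∧
  (∀ p, φ p 0 = p) ∧
  (∀ p s t, φ (φ p s) t = φ p (s + t))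

/-- `p` is a transverse entry point of `N`. -/
def TransEntry (φ : R3 → ℝ → R3) (N : Set R3) (p : R3) : Prop :=
  ∃ ε > (0 : ℝ), (φ p '' Ioo (-ε) 0) ∩ N = ∅ ∧ φ p '' Ioo 0 ε ⊆ interior N

/-- `p` is a transverse exit point of `N`. -/
def TransExit (φ : R3 → ℝ → R3) (N : Set R3) (p : R3) : Prop :=
  ∃ ε > (0 : ℝ), φ p '' Ioo (-ε) 0 ⊆ interior N ∧ (φ p '' Ioo 0 ε) ∩ N = ∅

/-- `p` is an exterior tangency of `N`. -/
def ExtTangency (φ : R3 → ℝ → R3) (N : Set R3) (p : R3) : Prop :=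
  ∃ ε > (0 : ℝ), (φ p '' Ioo (-ε) 0) ∩ N = ∅ ∧ (φ p '' Ioo 0 ε) ∩ N = ∅

/-- Every frontier point of `N` is a transverse entry point, a transverse exit
point, or an exterior tangency. -/
def BoundaryTrichotomy (φ : R3 → ℝ → R3) (N : Set R3) : Prop :=
  ∀ p ∈ frontier N, TransEntry φ N p ∨ TransExit φ N p ∨ ExtTangency φ N p

/-- The exit time `t°(p) = sup {t ∈ [0,∞) : p·[0,t] ⊆ N} ∈ [0,∞]`. -/
noncomputable def exitTime (φ : R3 → ℝ → R3) (N : Set R3) (p : R3) : ℝ≥0∞ :=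
  ⨆ (t : ℝ) (_ : 0 ≤ t ∧ ∀ s ∈ Icc 0 t, φ p s ∈ N), ENNReal.ofReal t

/-- If `N` satisfies the boundary trichotomy, then for every `p ∈ N` and every
real `t` with `0 < t < t°(p)`, the point `p·t` lies in the interior of `N`. -/
theorem exit_interior (φ : R3 → ℝ → R3) (hφ : IsFlow φ)
    (N : Set R3) (hN : IsCompact N) (htri : BoundaryTrichotomy φ N)
    (p : R3) (hp : p ∈ N) (t : ℝ) (ht : 0 < t)
    (htlt : ENNReal.ofReal t < exitTime φ N p) :
    φ p t ∈ interior N := by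
  rw [exitTime] at htlt
  rw [lt_iSup_iff] at htlt
  obtain ⟨t₀, h₀⟩ := htlt
  rw [lt_iSup_iff] at h₀
  obtain ⟨⟨ht₀0, hstay⟩, hlt⟩ := h₀
  have httlt : t < t₀ := by
    by_contra h
    push_neg at h
    exact absurd (ENNReal.ofReal_le_ofReal h) (not_le.mpr hlt)
  by_contra hint
  have hqN : φ p t ∈ N := hstay t ⟨le_of_lt ht, le_of_lt httlt⟩
  have hfr : φ p t ∈ frontier N := by
    rw [frontier, hN.isClosed.closure_eq]
    exact ⟨hqN, hint⟩
  have hflow : ∀ s : ℝ, φ (φ p t) s = φ p (t + s) := fun s => hφ.2.2 p t s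
  -- any small negative s: φ p (t+s) ∈ N; any small positive s: φ p (t+s) ∈ N
  have hneg : ∀ ε > (0:ℝ), ¬ ((φ (φ p t) '' Ioo (-ε) 0) ∩ N = ∅) := by
    intro ε hε h
    set s : ℝ := -(min ε t / 2) with hs
    have hmin : 0 < min ε t := lt_min hε ht
    have hsIoo : s ∈ Ioo (-ε) 0 := by
      constructor
      · simp only [hs, neg_lt_neg_iff]
        calc min ε t / 2 < min ε t := by linarith
          _ ≤ ε := min_le_left _ _
      · simp only [hs, neg_neg, Left.neg_neg_iff]; linarith
    have hmem : φ p (t + s) ∈ N := by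
      apply hstay
      constructor
      · have : min ε t ≤ t := min_le_right _ _
        simp only [hs]; linarith
      · simp only [hs]; linarith
    have : φ (φ p t) s ∈ (φ (φ p t) '' Ioo (-ε) 0) ∩ N :=
      ⟨mem_image_of_mem _ hsIoo, by rw [hflow]; exact hmem⟩
    rw [h] at this
    exact this
  have hpos : ∀ ε > (0:ℝ), ¬ ((φ (φ p t) '' Ioo 0 ε) ∩ N = ∅) := by
    intro ε hε h
    set s : ℝ := min ε (t₀ - t) / 2 with hs
    have hmin : 0 < min ε (t₀ - t) := lt_min hε (by linarith)
    have hsIoo : s ∈ Ioo 0 ε := by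
      constructor
      · simp only [hs]; linarith
      · have : min ε (t₀ - t) ≤ ε := min_le_left _ _
        simp only [hs]; linarith
    have hmem : φ p (t + s) ∈ N := by
      apply hstay
      constructor
      · simp only [hs]; linarith
      · have : min ε (t₀ - t) ≤ t₀ - t := min_le_right _ _
        simp only [hs]; linarith
    have : φ (φ p t) s ∈ (φ (φ p t) '' Ioo 0 ε) ∩ N :=
      ⟨mem_image_of_mem _ hsIoo, by rw [hflow]; exact hmem⟩
    rw [h] at this
    exact this
  rcases htri _ hfr with ⟨ε, hε, h1, _⟩ | ⟨ε, hε, _, h2⟩ | ⟨ε, hε, h1, _⟩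
  · exact hneg ε hε h1
  · exact hpos ε hε h2
  · exact hneg ε hε h1
end

section
/- Let N satisfy the boundary trichotomy. Then for every p ∈ N with 0 < t°(p) < ∞, the point p·t°(p) is a transverse exit point of N. -/
open Set
open scoped ENNReal

/-- If `N` satisfies the boundary trichotomy, then for every `p ∈ N` with
`0 < t°(p) < ∞`, the point `p·t°(p)` is a transverse exit point of `N`. -/
theorem exitTime_transExit (φ : R3 → ℝ → R3) (hφ : IsFlow φ)
    (N : Set R3) (hN : IsCompact N) (htri : BoundaryTrichotomy φ N)
    (p : R3) (hp : p ∈ N) (h0 : 0 < exitTime φ N p) (hfin : exitTime φ N p < ⊤) :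
    φ p (exitTime φ N p).toReal ∈ frontier N ∧
      TransExit φ N (φ p (exitTime φ N p).toReal) := by
  obtain ⟨hcont, hzero, hadd⟩ := hφ
  set T := (exitTime φ N p).toReal with hTdef
  have hcontp : Continuous fun t : ℝ => φ p t :=
    hcont.comp (continuous_const.prodMk continuous_id)
  have hNc : IsClosed N := hN.isClosed
  have hTpos : 0 < T := ENNReal.toReal_pos h0.ne' hfin.ne
  -- any admissible time is ≤ T
  have hub : ∀ t : ℝ, (0 ≤ t ∧ ∀ s ∈ Icc 0 t, φ p s ∈ N) → t ≤ T := by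
    intro t ht
    have h1 : ENNReal.ofReal t ≤ exitTime φ N p :=
      le_iSup₂ (f := fun (t : ℝ) (_ : 0 ≤ t ∧ ∀ s ∈ Icc 0 t, φ p s ∈ N) =>
        ENNReal.ofReal t) t ht
    have h2 := ENNReal.toReal_mono hfin.ne h1
    rwa [ENNReal.toReal_ofReal ht.1] at h2
  -- membership strictly before T
  have hmemlt : ∀ s : ℝ, 0 ≤ s → s < T → φ p s ∈ N := by
    intro s hs0 hsT
    by_contra hsN
    have hs_ub : ∀ t : ℝ, (0 ≤ t ∧ ∀ u ∈ Icc 0 t, φ p u ∈ N) → t ≤ s := by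
      intro t ht
      by_contra h
      push_neg at h
      exact hsN (ht.2 s ⟨hs0, le_of_lt h⟩)
    have hle : exitTime φ N p ≤ ENNReal.ofReal s := by
      refine iSup₂_le fun t ht => ?_
      exact ENNReal.ofReal_le_ofReal (hs_ub t ht)
    have h2 : T ≤ s := by
      have h3 := ENNReal.toReal_mono ENNReal.ofReal_ne_top hle
      rwa [ENNReal.toReal_ofReal hs0] at h3
    exact absurd hsT (not_lt.mpr h2)
  have hqN : φ p T ∈ N := by
    have hTcl : T ∈ closure (Ico 0 T) := by
      rw [closure_Ico hTpos.ne]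
      exact ⟨hTpos.le, le_rfl⟩
    have := map_mem_closure hcontp hTcl
      (fun s hs => hmemlt s hs.1 hs.2)
    rwa [hNc.closure_eq] at this
  have hmem : ∀ s ∈ Icc (0:ℝ) T, φ p s ∈ N := by
    intro s hs
    rcases lt_or_eq_of_le hs.2 with h | h
    · exact hmemlt s hs.1 h
    · rw [h]; exact hqN
  -- φ p T is not interior
  have hqi : φ p T ∉ interior N := by
    intro hi
    have hopen : IsOpen ((fun t : ℝ => φ p t) ⁻¹' interior N) :=
      isOpen_interior.preimage hcontp
    rcases Metric.isOpen_iff.mp hopen T hi with ⟨δ, hδ, hball⟩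
    have hS : (0:ℝ) ≤ T + δ / 2 ∧ ∀ s ∈ Icc (0:ℝ) (T + δ / 2), φ p s ∈ N := by
      constructor
      · linarith
      · intro s hs
        rcases le_or_gt s T with h | h
        · exact hmem s ⟨hs.1, h⟩
        · have : s ∈ Metric.ball T δ := by
            rw [Metric.mem_ball, Real.dist_eq, abs_of_nonneg (by linarith [hs.2])]
            linarith [hs.2]
          exact interior_subset (hball this)
    have := hub _ hS
    linarith
  have hqfr : φ p T ∈ frontier N := by
    rw [hNc.frontier_eq]
    exact ⟨hqN, hqi⟩
  refine ⟨hqfr, ?_⟩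
  -- rule out entry and tangency: backward orbit is in N
  have hback : ∀ ε : ℝ, 0 < ε → (φ (φ p T) '' Ioo (-ε) 0) ∩ N ≠ ∅ := by
    intro ε hε
    have hmin : 0 < min ε T := lt_min hε hTpos
    set t₀ : ℝ := -(min ε T) / 2 with ht₀
    have ht₀mem : t₀ ∈ Ioo (-ε) 0 := by
      constructor
      · have : min ε T ≤ ε := min_le_left _ _
        rw [ht₀]; linarith
      · rw [ht₀]; linarith
    have hflow : φ (φ p T) t₀ = φ p (T + t₀) := hadd p T t₀
    have hTt₀ : φ p (T + t₀) ∈ N := by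
      refine hmem _ ⟨?_, ?_⟩
      · have : min ε T ≤ T := min_le_right _ _
        rw [ht₀]; linarith
      · rw [ht₀]; linarith
    intro hempty
    have : φ (φ p T) t₀ ∈ (φ (φ p T) '' Ioo (-ε) 0) ∩ N :=
      ⟨mem_image_of_mem _ ht₀mem, hflow ▸ hTt₀⟩
    rw [hempty] at this
    exact this
  rcases htri _ hqfr with h | h | h
  · obtain ⟨ε, hε, he, _⟩ := h
    exact absurd he (hback ε hε)
  · exact h
  · obtain ⟨ε, hε, he, _⟩ := h
    exact absurd he (hback ε hε)
end

section
/- Let N satisfy the boundary trichotomy, and let K := {p ∈ N : p·t ∈ N for all t ∈ ℝ} be the maximal invariant subset of N. Then K is contained in the interior of N. -/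
open Set
open scoped ENNReal

/-- If `N` satisfies the boundary trichotomy, then the maximal invariant subset
`K = {p ∈ N : p·t ∈ N for all t ∈ ℝ}` of `N` is contained in the interior of `N`. -/
theorem maximal_invariant_subset_interior (φ : R3 → ℝ → R3) (hφ : IsFlow φ)
    (N : Set R3) (hN : IsCompact N) (htri : BoundaryTrichotomy φ N) :
    {p ∈ N | ∀ t : ℝ, φ p t ∈ N} ⊆ interior N := by
  rintro p ⟨hpN, hinv⟩
  by_contra hint
  have hfr : p ∈ frontier N := ⟨subset_closure hpN, hint⟩
  have key : ∀ ε > (0 : ℝ), (φ p '' Ioo (-ε) 0) ∩ N ≠ ∅ ∧ (φ p '' Ioo 0 ε) ∩ N ≠ ∅ := by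
    intro ε hε
    constructor
    · intro h
      have : φ p (-(ε/2)) ∈ (φ p '' Ioo (-ε) 0) ∩ N :=
        ⟨⟨-(ε/2), ⟨by linarith, by linarith⟩, rfl⟩, hinv _⟩
      simp [h] at this
    · intro h
      have : φ p (ε/2) ∈ (φ p '' Ioo 0 ε) ∩ N :=
        ⟨⟨ε/2, ⟨by linarith, by linarith⟩, rfl⟩, hinv _⟩
      simp [h] at this
  rcases htri p hfr with ⟨ε, hε, h1, _⟩ | ⟨ε, hε, _, h2⟩ | ⟨ε, hε, h1, _⟩
  · exact (key ε hε).1 h1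
  · exact (key ε hε).2 h2
  · exact (key ε hε).1 h1
end

section
/- If a finite list S of words is balanced, then for every Whitehead substitution τ the list obtained by applying τ to every entry of S and then replacing every entry by its cyclic reduction is balanced. -/
/-- A letter `x_i^{±1}`: the index `i` together with a sign (`true` for `x_i`,
`false` for `x_i⁻¹`). -/
abbrev Letter (g : ℕ) := Fin g × Bool

/-- A word in the letters `x_1^{±1}, …, x_g^{±1}`. -/
abbrev Word (g : ℕ) := List (Letter g)

/-- The inverse of a letter. -/
def invL {g : ℕ} (a : Letter g) : Letter g := (a.1, !a.2)

/-- The inverse of a word: the reversed sequence with each letter inverted. -/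
def wordInv {g : ℕ} (w : Word g) : Word g := (w.map invL).reverse

/-- Cancel the first adjacent pair of mutually inverse letters, if any. -/
def reduceOnce {g : ℕ} : Word g → Option (Word g)
  | [] => none
  | [_] => none
  | a :: b :: rest =>
    if b = invL a then some rest
    else (reduceOnce (b :: rest)).map (a :: ·)

/-- Perform one cyclic cancellation: cancel an adjacent pair of mutually inverse
letters or, failing that, cancel the first and last letters if they are
mutually inverse. -/
def cycOnce {g : ℕ} (w : Word g) : Option (Word g) :=
  match reduceOnce w with
  | some w' => some w'
  | none =>
    match w with
    | [] => none
    | a :: t =>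
      match t.getLast? with
      | none => none
      | some b => if a = invL b then some t.dropLast else none

/-- Auxiliary fuelled iteration of `cycOnce`; since every cancellation strictly
decreases the length, fuel `w.length` always suffices to reach a cyclically
reduced word. -/
def cyclicReduceAux {g : ℕ} : ℕ → Word g → Word g
  | 0, w => w
  | n + 1, w =>
    match cycOnce w with
    | none => w
    | some w' => cyclicReduceAux n w'

/-- The cyclic reduction of a word, obtained by repeatedly cancelling adjacent
(or wrapping-around) pairs of mutually inverse letters. -/
def cyclicReduce {g : ℕ} (w : Word g) : Word g := cyclicReduceAux w.length w

/-- A word is cyclically reduced if no two consecutive letters, and also not the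
last and first letters, are mutually inverse. -/
def IsCyclicallyReduced {g : ℕ} (w : Word g) : Prop :=
  w.Chain' (fun a b => b ≠ invL a) ∧ ∀ a ∈ w.head?, ∀ b ∈ w.getLast?, a ≠ invL b

/-- Total number of occurrences of the letter `a` among the entries of `S`. -/
def countS {g : ℕ} (S : List (Word g)) (a : Letter g) : ℕ :=
  (S.map (fun w => w.count a)).sum

/-- Condition (A): for every `i`, the letters `x_i, x_i⁻¹` either do not occur
at all among the entries of `S`, or each occurs exactly once in total. -/
def CondA {g : ℕ} (S : List (Word g)) : Prop :=
  ∀ i : Fin g,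
    (countS S (i, true) = 0 ∧ countS S (i, false) = 0) ∨
    (countS S (i, true) = 1 ∧ countS S (i, false) = 1)

/-- `S` is balanced: for every `i`, `x_i` and `x_i⁻¹` occur the same total
number of times among the entries of `S`. -/
def IsBalanced {g : ℕ} (S : List (Word g)) : Prop :=
  ∀ i : Fin g, countS S (i, true) = countS S (i, false)

/-- A Whitehead substitution of type (1): a bijection of the set of letters
commuting with inversion. -/
def IsType1 {g : ℕ} (η : Letter g → Word g) : Prop :=
  ∃ π : Equiv.Perm (Letter g),
    (∀ a, π (invL a) = invL (π a)) ∧ ∀ a, η a = [π a]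

/-- A Whitehead substitution of type (2) with multiplier `a`: it fixes `a` and
`a⁻¹`, and replaces every other generator `x_i` by one of `x_i`, `x_i a`,
`a⁻¹ x_i`, `a⁻¹ x_i a` (and `x_i⁻¹` by the inverse of the word substituted
for `x_i`). -/
def IsType2With {g : ℕ} (a : Letter g) (η : Letter g → Word g) : Prop :=
  η a = [a] ∧ η (invL a) = [invL a] ∧
  ∀ i : Fin g, i ≠ a.1 →
    (η (i, true) = [(i, true)] ∨ η (i, true) = [(i, true), a] ∨
     η (i, true) = [invL a, (i, true)] ∨ η (i, true) = [invL a, (i, true), a]) ∧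
    η (i, false) = wordInv (η (i, true))

/-- A Whitehead substitution of type (2). -/
def IsType2 {g : ℕ} (η : Letter g → Word g) : Prop := ∃ a, IsType2With a η

/-- A Whitehead substitution. -/
def IsWhitehead {g : ℕ} (η : Letter g → Word g) : Prop := IsType1 η ∨ IsType2 η

/-- Apply a substitution to a word, replacing each letter by the word
substituted for it. -/
def applySub {g : ℕ} (η : Letter g → Word g) (w : Word g) : Word g :=
  (w.map η).flatten

/-- The algebraic length of a word: the number of letters of its cyclic
reduction. -/
def algLen {g : ℕ} (w : Word g) : ℕ := (cyclicReduce w).length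

/-- The algebraic length of a finite list of words: the sum of the algebraic
lengths of its entries. -/
def algLenS {g : ℕ} (S : List (Word g)) : ℕ := (S.map algLen).sum


section Aux
variable {g : ℕ}

lemma invL_invL (a : Letter g) : invL (invL a) = a := by
  simp [invL]

lemma wordInv_wordInv (w : Word g) : wordInv (wordInv w) = w := by
  simp [wordInv, List.map_reverse, List.map_map, Function.comp_def, invL_invL]

/-- Signed count of the generator `x_i` in a word. -/
def dcnt (w : Word g) (i : Fin g) : ℤ :=
  (w.count (i, true) : ℤ) - (w.count (i, false) : ℤ)

lemma dcnt_append (u v : Word g) (i : Fin g) :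
    dcnt (u ++ v) i = dcnt u i + dcnt v i := by
  simp only [dcnt, List.count_append]; push_cast; ring

lemma dcnt_pair (b : Letter g) (i : Fin g) :
    dcnt [b, invL b] i = 0 := by
  rcases b with ⟨j, s⟩
  by_cases h : i = j <;> cases s <;>
    simp [dcnt, invL, h, List.count_cons, Prod.ext_iff]

lemma count_wordInv (w : Word g) (x : Letter g) :
    (wordInv w).count x = w.count (invL x) := by
  induction w with
  | nil => rfl
  | cons a w ih =>
    have h1 : wordInv (a :: w) = wordInv w ++ [invL a] := by simp [wordInv]
    rw [h1, List.count_append, ih]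
    rcases eq_or_ne (invL x) a with h | h
    · have hx : x = invL a := by rw [← h, invL_invL]
      subst hx
      simp [invL_invL, List.count_cons]
    · have hx : x ≠ invL a := fun he => h (by rw [he, invL_invL])
      simp [List.count_cons, hx, h, Ne.symm hx, Ne.symm h]

lemma dcnt_wordInv (w : Word g) (i : Fin g) :
    dcnt (wordInv w) i = - dcnt w i := by
  simp only [dcnt, count_wordInv, invL]
  simp

lemma reduceOnce_exists : ∀ (w w' : Word g), reduceOnce w = some w' →
    ∃ l b r, w = l ++ b :: invL b :: r ∧ w' = l ++ r
  | [], _, h => by simp [reduceOnce] at h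
  | [a], _, h => by simp [reduceOnce] at h
  | a :: b :: rest, w', h => by
    rw [reduceOnce] at h
    split_ifs at h with hb
    · refine ⟨[], a, rest, by simp [hb], by simpa using h.symm⟩
    · obtain ⟨v, hv, hw'⟩ := Option.map_eq_some_iff.mp h
      obtain ⟨l, c, r, h1, h2⟩ := reduceOnce_exists _ _ hv
      exact ⟨a :: l, c, r, by simp [h1], by simp [h2, ← hw']⟩

lemma dcnt_reduceOnce {w w' : Word g} (h : reduceOnce w = some w') (i : Fin g) :
    dcnt w i = dcnt w' i := by
  obtain ⟨l, b, r, h1, h2⟩ := reduceOnce_exists w w' h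
  subst h1; subst h2
  have he : (l ++ b :: invL b :: r : Word g) = l ++ ([b, invL b] ++ r) := by simp
  rw [he, dcnt_append, dcnt_append, dcnt_append, dcnt_pair]
  ring

lemma dcnt_cycOnce {w w' : Word g} (h : cycOnce w = some w') (i : Fin g) :
    dcnt w i = dcnt w' i := by
  unfold cycOnce at h
  split at h
  · next v hv =>
    cases h
    exact dcnt_reduceOnce hv i
  · next hv =>
    split at h
    · simp at h
    · next a t =>
      split at h
      · simp at h
      · next b hb =>
        split_ifs at h with hab
        cases h
        have ht : t ≠ [] := by intro hnil; rw [hnil] at hb; simp at hb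
        have hgl : t.getLast ht = b := by
          rw [List.getLast?_eq_getLast ht] at hb
          exact Option.some_inj.mp hb
        have hdec : t.dropLast ++ [b] = t := by
          rw [← hgl]; exact List.dropLast_append_getLast ht
        have hw : (a :: t : Word g) = [a] ++ (t.dropLast ++ [b]) := by
          rw [hdec]; simp
        rw [hw, dcnt_append, dcnt_append, hab]
        have h0 := dcnt_pair b i
        have hp : dcnt [b, invL b] i = dcnt [b] i + dcnt [invL b] i := by
          have := dcnt_append [b] [invL b] i; simpa using this
        rw [hp] at h0
        linarith

lemma dcnt_cyclicReduceAux : ∀ (n : ℕ) (w : Word g) (i : Fin g),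
    dcnt (cyclicReduceAux n w) i = dcnt w i
  | 0, w, i => rfl
  | n + 1, w, i => by
    unfold cyclicReduceAux
    split
    · rfl
    · next v hv =>
      rw [dcnt_cyclicReduceAux n v i]
      exact (dcnt_cycOnce hv i).symm

lemma dcnt_cyclicReduce (w : Word g) (i : Fin g) :
    dcnt (cyclicReduce w) i = dcnt w i :=
  dcnt_cyclicReduceAux _ _ _

lemma dcnt_applySub (η : Letter g → Word g) (w : Word g) (i : Fin g) :
    dcnt (applySub η w) i = ∑ b : Letter g, (w.count b : ℤ) * dcnt (η b) i := by
  induction w with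
  | nil => simp [applySub, dcnt]
  | cons a w ih =>
    have h1 : applySub η (a :: w) = η a ++ applySub η w := by simp [applySub]
    rw [h1, dcnt_append, ih]
    have key : ∀ b : Letter g, ((a :: w).count b : ℤ) * dcnt (η b) i
        = (if b = a then dcnt (η b) i else 0) + (w.count b : ℤ) * dcnt (η b) i := by
      intro b
      rcases eq_or_ne b a with hba | hba
      · subst hba
        rw [List.count_cons_self]
        push_cast
        simp
        ring
      · rw [List.count_cons_of_ne hba.symm]
        simp [hba]
    rw [Finset.sum_congr rfl fun b _ => key b, Finset.sum_add_distrib,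
      Finset.sum_ite_eq' Finset.univ a (fun b => dcnt (η b) i)]
    simp [add_comm]

lemma countS_cast (S : List (Word g)) (b : Letter g) :
    (countS S b : ℤ) = (S.map fun w => ((w.count b : ℕ) : ℤ)).sum := by
  induction S with
  | nil => simp [countS]
  | cons w S ih => simp [countS] at ih ⊢; omega

lemma sum_dcnt (T : List (Word g)) (i : Fin g) :
    (T.map fun w => dcnt w i).sum = (countS T (i, true) : ℤ) - countS T (i, false) := by
  induction T with
  | nil => simp [countS]
  | cons w T ih =>
    simp only [List.map_cons, List.sum_cons, ih, countS, dcnt] at *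
    push_cast
    ring

lemma sum_map_fsum {α : Type*} (S : List α) (f : α → Letter g → ℤ) :
    (S.map fun w => ∑ b : Letter g, f w b).sum = ∑ b : Letter g, (S.map fun w => f w b).sum := by
  induction S with
  | nil => simp
  | cons w S ih => simp [ih, Finset.sum_add_distrib]

lemma list_sum_map_mul_right {α : Type*} (S : List α) (f : α → ℤ) (c : ℤ) :
    (S.map fun w => f w * c).sum = (S.map f).sum * c := by
  induction S with
  | nil => simp
  | cons w S ih => simp [ih]; ring

lemma whitehead_inv {η : Letter g → Word g} (hη : IsWhitehead η) :
    ∀ b, η (invL b) = wordInv (η b) := by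
  rcases hη with ⟨π, hπ, hηdef⟩ | ⟨a, ha, hia, hgen⟩
  · intro b
    simp [hηdef, hπ, wordInv]
  · intro b
    rcases b with ⟨j, s⟩
    by_cases hj : j = a.1
    · subst hj
      rcases a with ⟨j, t⟩
      cases s <;> cases t <;> simp_all [invL, wordInv]
    · cases s
      · have h := (hgen j hj).2
        show η (j, true) = wordInv (η (j, false))
        rw [h, wordInv_wordInv]
      · exact (hgen j hj).2

end Aux

/-- If a finite list `S` of words is balanced, then for every Whitehead
substitution `τ` the list obtained by applying `τ` to every entry of `S` and
then replacing every entry by its cyclic reduction is balanced. -/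
theorem balanced_whitehead {g : ℕ} (hg : 1 ≤ g) (S : List (Word g))
    (hbal : IsBalanced S) (η : Letter g → Word g) (hη : IsWhitehead η) :
    IsBalanced ((S.map (applySub η)).map cyclicReduce) := by
  intro i
  have h0 : ((S.map (applySub η)).map cyclicReduce).map (fun w => dcnt w i)
      = S.map fun w => dcnt (cyclicReduce (applySub η w)) i := by
    simp [List.map_map, Function.comp_def]
  have hinv := whitehead_inv hη
  have hsum : (((S.map (applySub η)).map cyclicReduce).map (fun w => dcnt w i)).sum = 0 := by
    rw [h0]
    have h1 : (S.map fun w => dcnt (cyclicReduce (applySub η w)) i)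
        = S.map fun w => ∑ b : Letter g, (w.count b : ℤ) * dcnt (η b) i := by
      apply List.map_congr_left
      intro w _
      rw [dcnt_cyclicReduce, dcnt_applySub]
    rw [h1, sum_map_fsum]
    have h2 : ∀ b : Letter g, (S.map fun w => (w.count b : ℤ) * dcnt (η b) i).sum
        = (countS S b : ℤ) * dcnt (η b) i := by
      intro b
      rw [list_sum_map_mul_right, ← countS_cast]
    rw [Finset.sum_congr rfl fun b _ => h2 b]
    rw [Fintype.sum_prod_type]
    apply Finset.sum_eq_zero
    intro j _
    rw [Fintype.sum_bool]
    have hc : countS S (j, false) = countS S (j, true) := (hbal j).symm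
    have hd : dcnt (η (j, false)) i = - dcnt (η (j, true)) i := by
      have he : ((j, false) : Letter g) = invL (j, true) := rfl
      rw [he, hinv, dcnt_wordInv]
    rw [hc, hd]
    ring
  rw [sum_dcnt] at hsum
  omega
end

section
/- For every Whitehead substitution τ, the induced endomorphism of the free group F_g on generators x₁, …, x_g (sending each generator x_i to the element of F_g represented by the word that τ substitutes for x_i) is an automorphism of F_g, and its inverse automorphism is the endomorphism induced by some Whitehead substitution. -/
/-- The endomorphism of the free group `F_g` induced by a substitution `η`,
sending each generator `x_i` to the element represented by the word `η x_i`. -/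
noncomputable def inducedHom {g : ℕ} (η : Letter g → Word g) :
    FreeGroup (Fin g) →* FreeGroup (Fin g) :=
  FreeGroup.lift (fun i : Fin g => FreeGroup.mk (η (i, true)))

section Helpers
variable {g : ℕ}

lemma invL_ne (a : Letter g) : invL a ≠ a := by
  simp [invL, Prod.ext_iff]

lemma wordInv_eq_invRev (w : Word g) : wordInv w = FreeGroup.invRev w := rfl

lemma mk_wordInv (w : Word g) : FreeGroup.mk (wordInv w) = (FreeGroup.mk w)⁻¹ := by
  rw [wordInv_eq_invRev, FreeGroup.inv_mk]

lemma mk_append (L1 L2 : Word g) :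
    FreeGroup.mk (L1 ++ L2) = FreeGroup.mk L1 * FreeGroup.mk L2 :=
  (FreeGroup.mul_mk).symm

lemma mk_true (j : Fin g) : FreeGroup.mk [(j, true)] = FreeGroup.of j := rfl

lemma mk_invL (b : Letter g) : FreeGroup.mk [invL b] = (FreeGroup.mk [b])⁻¹ := by
  have := mk_wordInv (g := g) [b]
  simpa [wordInv] using this

/-- property: the substitution respects inversion on generators -/
def RespInv {g : ℕ} (η : Letter g → Word g) : Prop :=
  ∀ j : Fin g, η (j, false) = wordInv (η (j, true))

lemma inducedHom_of (η : Letter g → Word g) (j : Fin g) :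
    inducedHom η (FreeGroup.of j) = FreeGroup.mk (η (j, true)) := by
  simp [inducedHom]

lemma inducedHom_letter (η : Letter g → Word g) (h : RespInv η) (b : Letter g) :
    inducedHom η (FreeGroup.mk [b]) = FreeGroup.mk (η b) := by
  obtain ⟨j, s⟩ := b
  cases s
  · have : FreeGroup.mk [(j, false)] = (FreeGroup.of j)⁻¹ := by
      have := mk_invL (g := g) (j, true)
      exact this
    rw [this, map_inv, inducedHom_of, h j, mk_wordInv]
  · rw [mk_true, inducedHom_of]

lemma whitehead_respInv (η : Letter g → Word g) (hη : IsWhitehead η) : RespInv η := by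
  intro j
  rcases hη with ⟨π, hπ, hval⟩ | ⟨a, ha1, ha2, ha3⟩
  · rw [hval, hval]
    have : (j, false) = invL (j, true) := by simp [invL]
    rw [this, hπ]
    rfl
  · by_cases hj : j = a.1
    · subst hj
      obtain ⟨m, s⟩ := a
      cases s
      · have h1 : η (m, false) = [(m, false)] := ha1
        have h2 : η (m, true) = [(m, true)] := by
          have := ha2; simpa [invL] using this
        rw [h1, h2]; rfl
      · have h1 : η (m, true) = [(m, true)] := ha1
        have h2 : η (m, false) = [(m, false)] := by
          have := ha2; simpa [invL] using this
        rw [h1, h2]; rfl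
    · exact (ha3 j hj).2

end Helpers


section MoreHelpers
variable {g : ℕ}

/-- swap `a` and `a⁻¹`, fixing all other letters -/
def swapL (a : Letter g) (c : Letter g) : Letter g :=
  if c = a then invL a else if c = invL a then a else c

lemma swapL_a (a : Letter g) : swapL a a = invL a := if_pos rfl

lemma swapL_ia (a : Letter g) : swapL a (invL a) = a := by
  simp [swapL, invL_ne]

lemma swapL_other (a c : Letter g) (h : c.1 ≠ a.1) : swapL a c = c := by
  have h1 : c ≠ a := fun hc => h (by rw [hc])
  have h2 : c ≠ invL a := fun hc => h (by rw [hc]; rfl)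
  simp [swapL, h1, h2]

lemma swapL_invL (a c : Letter g) : swapL a (invL c) = invL (swapL a c) := by
  by_cases h1 : c = a
  · subst h1; rw [swapL_ia, swapL_a, invL_invL]
  · by_cases h2 : c = invL a
    · subst h2; rw [invL_invL, swapL_a, swapL_ia]
    · have h1' : invL c ≠ a := fun hc => h2 (by rw [← hc, invL_invL])
      have h2' : invL c ≠ invL a := fun hc => h1 (by
        have := congrArg invL hc; rwa [invL_invL, invL_invL] at this)
      simp [swapL, h1, h2, h1', h2']

lemma swapL_wordInv (a : Letter g) (w : Word g) :
    (wordInv w).map (swapL a) = wordInv (w.map (swapL a)) := by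
  simp only [wordInv, List.map_reverse, List.map_map]
  congr 1
  congr 1
  funext c
  exact swapL_invL a c

/-- The inverse substitution of a type-2 Whitehead substitution. -/
def invSub (a : Letter g) (η : Letter g → Word g) (b : Letter g) : Word g :=
  if b.1 = a.1 then [b] else (η b).map (swapL a)

lemma type2_fix {a : Letter g} {η : Letter g → Word g} (h : IsType2With a η) :
    η (a.1, true) = [(a.1, true)] := by
  obtain ⟨m, s⟩ := a
  cases s
  · simpa [invL] using h.2.1
  · exact h.1

lemma invSub_type2 {a : Letter g} {η : Letter g → Word g} (hη : IsType2With a η) :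
    IsType2With (invL a) (invSub a η) := by
  obtain ⟨ha1, ha2, ha3⟩ := hη
  refine ⟨?_, ?_, ?_⟩
  · show (if ((invL a).1 : Fin g) = a.1 then _ else _) = _
    have hc : ((invL a).1 : Fin g) = a.1 := rfl
    rw [if_pos hc]
  · rw [invL_invL]
    show (if (a.1 : Fin g) = a.1 then _ else _) = _
    rw [if_pos rfl]
  · intro i hi
    have hi' : i ≠ a.1 := hi
    have hval : ∀ s : Bool, invSub a η (i, s) = (η (i, s)).map (swapL a) := by
      intro s
      show (if ((i, s) : Letter g).1 = a.1 then _ else _) = _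
      rw [if_neg hi']
    have hsw : swapL a (i, true) = (i, true) := swapL_other a _ hi'
    constructor
    · rcases (ha3 i hi').1 with h | h | h | h
      · left; rw [hval, h]; simp [hsw]
      · right; left; rw [hval, h]; simp [hsw, swapL_a]
      · right; right; left; rw [hval, h]; simp [hsw, swapL_ia, invL_invL]
      · right; right; right; rw [hval, h]; simp [hsw, swapL_a, swapL_ia, invL_invL]
    · rw [hval, hval, (ha3 i hi').2, swapL_wordInv]

end MoreHelpers

/-- For every Whitehead substitution `τ`, the induced endomorphism of the free
group `F_g` is an automorphism, and its inverse is the endomorphism induced by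
some Whitehead substitution. -/
theorem whitehead_induces_automorphism {g : ℕ} (hg : 1 ≤ g)
    (η : Letter g → Word g) (hη : IsWhitehead η) :
    Function.Bijective (inducedHom η) ∧
    ∃ η' : Letter g → Word g, IsWhitehead η' ∧
      (∀ x, inducedHom η' (inducedHom η x) = x) ∧
      (∀ x, inducedHom η (inducedHom η' x) = x) := by
  have comp_id : ∀ {φ ψ : FreeGroup (Fin g) →* FreeGroup (Fin g)},
      (∀ i, ψ (φ (FreeGroup.of i)) = FreeGroup.of i) → ∀ x, ψ (φ x) = x := by
    intro φ ψ h x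
    have key : ψ.comp φ = MonoidHom.id _ :=
      FreeGroup.ext_hom _ _ (fun i => by simpa using h i)
    simpa using DFunLike.congr_fun key x
  suffices h : ∃ η' : Letter g → Word g, IsWhitehead η' ∧
      (∀ x, inducedHom η' (inducedHom η x) = x) ∧
      (∀ x, inducedHom η (inducedHom η' x) = x) by
    obtain ⟨η', hW, h1, h2⟩ := h
    exact ⟨Function.bijective_iff_has_inverse.mpr ⟨inducedHom η', h1, h2⟩, η', hW, h1, h2⟩
  rcases hη with ⟨π, hπ, hval⟩ | ⟨a, hT2⟩
  · -- type 1
    set η' : Letter g → Word g := fun b => [π.symm b] with hη'def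
    have hπ' : ∀ b, π.symm (invL b) = invL (π.symm b) := by
      intro b
      apply π.injective
      rw [Equiv.apply_symm_apply, hπ, Equiv.apply_symm_apply]
    have hW' : IsWhitehead η' := Or.inl ⟨π.symm, hπ', fun _ => rfl⟩
    have hresp' : RespInv η' := whitehead_respInv η' hW'
    have hresp : RespInv η := whitehead_respInv η (Or.inl ⟨π, hπ, hval⟩)
    refine ⟨η', hW', comp_id ?_, comp_id ?_⟩
    · intro i
      rw [inducedHom_of, hval, inducedHom_letter η' hresp']
      show FreeGroup.mk [π.symm (π (i, true))] = _
      rw [Equiv.symm_apply_apply]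
      rfl
    · intro i
      rw [inducedHom_of]
      show inducedHom η (FreeGroup.mk [π.symm (i, true)]) = _
      rw [inducedHom_letter η hresp, hval, Equiv.apply_symm_apply]
      rfl
  · -- type 2
    obtain ⟨ha1, ha2, ha3⟩ := hT2
    set η' : Letter g → Word g := invSub a η with hη'def
    have hT2' : IsType2With (invL a) η' := invSub_type2 ⟨ha1, ha2, ha3⟩
    have hW' : IsWhitehead η' := Or.inr ⟨invL a, hT2'⟩
    have hresp' : RespInv η' := whitehead_respInv η' hW'
    have hresp : RespInv η := whitehead_respInv η (Or.inr ⟨a, ha1, ha2, ha3⟩)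
    have hηa : η a = [a] := ha1
    have hη'a : η' a = [a] := by
      rw [hη'def]
      show (if (a.1 : Fin g) = a.1 then _ else _) = _
      rw [if_pos rfl]
    have hφA : inducedHom η (FreeGroup.mk [a]) = FreeGroup.mk [a] := by
      rw [inducedHom_letter η hresp, hηa]
    have hψA : inducedHom η' (FreeGroup.mk [a]) = FreeGroup.mk [a] := by
      rw [inducedHom_letter η' hresp', hη'a]
    have key : ∀ i : Fin g,
        inducedHom η' (inducedHom η (FreeGroup.of i)) = FreeGroup.of i ∧
        inducedHom η (inducedHom η' (FreeGroup.of i)) = FreeGroup.of i := by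
      intro i
      by_cases hi : i = a.1
      · subst hi
        have h1 : η (a.1, true) = [(a.1, true)] := type2_fix ⟨ha1, ha2, ha3⟩
        have h2 : η' (a.1, true) = [(a.1, true)] := by
          have := type2_fix hT2'
          exact this
        constructor
        · rw [inducedHom_of, h1, mk_true, inducedHom_of, h2, mk_true]
        · rw [inducedHom_of, h2, mk_true, inducedHom_of, h1, mk_true]
      · have hval' : η' (i, true) = (η (i, true)).map (swapL a) := by
          rw [hη'def]
          show (if ((i, true) : Letter g).1 = a.1 then _ else _) = _
          rw [if_neg hi]
        have hsw : swapL a (i, true) = (i, true) := swapL_other a _ hi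
        rcases (ha3 i hi).1 with h | h | h | h
        · have h' : η' (i, true) = [(i, true)] := by rw [hval', h]; simp [hsw]
          constructor
          · rw [inducedHom_of, h, mk_true, inducedHom_of, h', mk_true]
          · rw [inducedHom_of, h', mk_true, inducedHom_of, h, mk_true]
        · have h' : η' (i, true) = [(i, true), invL a] := by
            rw [hval', h]; simp [hsw, swapL_a]
          have hφ : inducedHom η (FreeGroup.of i) =
              FreeGroup.of i * FreeGroup.mk [a] := by
            rw [inducedHom_of, h,
              show ([(i, true), a] : Word g) = [(i, true)] ++ [a] from rfl,
              mk_append, mk_true]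
          have hψ : inducedHom η' (FreeGroup.of i) =
              FreeGroup.of i * (FreeGroup.mk [a])⁻¹ := by
            rw [inducedHom_of, h',
              show ([(i, true), invL a] : Word g) = [(i, true)] ++ [invL a] from rfl,
              mk_append, mk_true, mk_invL]
          constructor
          · rw [hφ, map_mul, hψ, hψA]; group
          · rw [hψ, map_mul, map_inv, hφ, hφA]; group
        · have h' : η' (i, true) = [a, (i, true)] := by
            rw [hval', h]; simp [hsw, swapL_ia]
          have hφ : inducedHom η (FreeGroup.of i) =
              (FreeGroup.mk [a])⁻¹ * FreeGroup.of i := by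
            rw [inducedHom_of, h,
              show ([invL a, (i, true)] : Word g) = [invL a] ++ [(i, true)] from rfl,
              mk_append, mk_true, mk_invL]
          have hψ : inducedHom η' (FreeGroup.of i) =
              FreeGroup.mk [a] * FreeGroup.of i := by
            rw [inducedHom_of, h',
              show ([a, (i, true)] : Word g) = [a] ++ [(i, true)] from rfl,
              mk_append, mk_true]
          constructor
          · rw [hφ, map_mul, map_inv, hψ, hψA]; group
          · rw [hψ, map_mul, hφ, hφA]; group
        · have h' : η' (i, true) = [a, (i, true), invL a] := by
            rw [hval', h]; simp [hsw, swapL_a, swapL_ia]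
          have hφ : inducedHom η (FreeGroup.of i) =
              (FreeGroup.mk [a])⁻¹ * (FreeGroup.of i * FreeGroup.mk [a]) := by
            rw [inducedHom_of, h,
              show ([invL a, (i, true), a] : Word g)
                = [invL a] ++ ([(i, true)] ++ [a]) from rfl,
              mk_append, mk_append, mk_true, mk_invL]
          have hψ : inducedHom η' (FreeGroup.of i) =
              FreeGroup.mk [a] * (FreeGroup.of i * (FreeGroup.mk [a])⁻¹) := by
            rw [inducedHom_of, h',
              show ([a, (i, true), invL a] : Word g)
                = [a] ++ ([(i, true)] ++ [invL a]) from rfl,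
              mk_append, mk_append, mk_true, mk_invL]
          constructor
          · rw [hφ, map_mul, map_mul, map_inv, hψ, hψA]; group
          · rw [hψ, map_mul, map_mul, map_inv, hφ, hφA]; group
    exact ⟨η', hW', comp_id (fun i => (key i).1), comp_id (fun i => (key i).2)⟩
end

section
/- Consider on ℝ² the vector field V(u) := (‖u‖ − 1)(3 − ‖u‖)·u. Then: (i) every u with ‖u‖ = 1 or ‖u‖ = 3 satisfies V(u) = 0, so constant curves at such points solve u′ = V(u); and (ii) every maximal solution u : ℝ → ℝ² of u′(t) = V(u(t)) with 1 < ‖u(0)‖ < 3 is defined for all t ∈ ℝ, satisfies 1 < ‖u(t)‖ < 3 for all t, the direction u(t)/‖u(t)‖ is constant in t, the function t ↦ ‖u(t)‖ is strictly increasing, ‖u(t)‖ → 3 as t → +∞, and ‖u(t)‖ → 1 as t → −∞. -/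
open scoped Topology

/-- The radial vector field `V(u) = (‖u‖ − 1)(3 − ‖u‖)·u` on `ℝ²`. -/
noncomputable def radialField (u : EuclideanSpace ℝ (Fin 2)) :
    EuclideanSpace ℝ (Fin 2) :=
  ((‖u‖ - 1) * (3 - ‖u‖)) • u

open Set Filter Metric

lemma radialField_lipschitzOnWith (R : ℝ) (hR : 0 ≤ R) :
    LipschitzOnWith (Real.toNNReal (3*R^2 + 8*R + 3)) radialField
      (Metric.closedBall (0 : EuclideanSpace ℝ (Fin 2)) R) := by
  apply LipschitzOnWith.of_dist_le_mul
  intro x hx y hy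
  rw [mem_closedBall_zero_iff] at hx hy
  have hd : (0:ℝ) ≤ ‖x - y‖ := norm_nonneg _
  have hxn : (0:ℝ) ≤ ‖x‖ := norm_nonneg _
  have hyn : (0:ℝ) ≤ ‖y‖ := norm_nonneg _
  have key : radialField x - radialField y
      = (4:ℝ) • (‖x‖ • x - ‖y‖ • y) - ((‖x‖^2) • x - (‖y‖^2) • y) - (3:ℝ) • (x - y) := by
    simp only [radialField]
    module
  have a3 : |‖x‖ - ‖y‖| ≤ ‖x - y‖ := abs_norm_sub_norm_le x y
  have n1 : ‖‖x‖ • x - ‖y‖ • y‖ ≤ 2*R*‖x-y‖ := by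
    have e : ‖x‖ • x - ‖y‖ • y = ‖x‖ • (x - y) + (‖x‖ - ‖y‖) • y := by module
    rw [e]
    refine (norm_add_le _ _).trans ?_
    rw [norm_smul, norm_smul, Real.norm_eq_abs, Real.norm_eq_abs, abs_of_nonneg hxn]
    nlinarith [abs_nonneg (‖x‖ - ‖y‖)]
  have n2 : ‖(‖x‖^2) • x - (‖y‖^2) • y‖ ≤ 3*R^2*‖x-y‖ := by
    have e : (‖x‖^2) • x - (‖y‖^2) • y = (‖x‖^2) • (x - y) + (‖x‖^2 - ‖y‖^2) • y := by module
    rw [e]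
    refine (norm_add_le _ _).trans ?_
    rw [norm_smul, norm_smul, Real.norm_eq_abs, Real.norm_eq_abs,
      abs_of_nonneg (sq_nonneg ‖x‖)]
    have habs : |‖x‖^2 - ‖y‖^2| ≤ 2 * R * ‖x - y‖ := by
      have e2 : ‖x‖^2 - ‖y‖^2 = (‖x‖ - ‖y‖) * (‖x‖ + ‖y‖) := by ring
      rw [e2, abs_mul, abs_of_nonneg (by positivity : (0:ℝ) ≤ ‖x‖ + ‖y‖)]
      nlinarith [abs_nonneg (‖x‖ - ‖y‖)]
    have hx2 : ‖x‖^2 ≤ R^2 := by nlinarith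
    nlinarith [abs_nonneg (‖x‖^2 - ‖y‖^2)]
  have hcoe : ((Real.toNNReal (3*R^2 + 8*R + 3) : NNReal) : ℝ) = 3*R^2 + 8*R + 3 :=
    Real.coe_toNNReal _ (by positivity)
  rw [dist_eq_norm, dist_eq_norm, hcoe, key]
  have t1 : ‖(4:ℝ) • (‖x‖ • x - ‖y‖ • y) - ((‖x‖^2) • x - (‖y‖^2) • y) - (3:ℝ) • (x - y)‖
      ≤ ‖(4:ℝ) • (‖x‖ • x - ‖y‖ • y)‖ + ‖(‖x‖^2) • x - (‖y‖^2) • y‖ + ‖(3:ℝ) • (x - y)‖ :=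
    (norm_sub_le _ _).trans (by gcongr; exact norm_sub_le _ _)
  refine t1.trans ?_
  rw [norm_smul, norm_smul, Real.norm_eq_abs, Real.norm_eq_abs]
  have : |(4:ℝ)| = 4 := by norm_num
  rw [this]
  have : |(3:ℝ)| = 3 := by norm_num
  rw [this]
  nlinarith

noncomputable def Gfun (r : ℝ) : ℝ :=
  -(1/3) * Real.log r + (1/2) * Real.log (r - 1) - (1/6) * Real.log (3 - r)

lemma Gfun_hasDerivAt {r : ℝ} (h1 : 1 < r) (h3 : r < 3) :
    HasDerivAt Gfun (r * ((r - 1) * (3 - r)))⁻¹ r := by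
  have hr0 : (0:ℝ) < r := by linarith
  have hr1 : (0:ℝ) < r - 1 := by linarith
  have hr3 : (0:ℝ) < 3 - r := by linarith
  have d1 : HasDerivAt (fun x : ℝ => Real.log x) r⁻¹ r := Real.hasDerivAt_log hr0.ne'
  have d2 : HasDerivAt (fun x : ℝ => Real.log (x - 1)) (r-1)⁻¹ r := by
    have h : HasDerivAt (fun x : ℝ => x - 1) 1 r := (hasDerivAt_id r).sub_const 1
    simpa [Function.comp_def] using (Real.hasDerivAt_log hr1.ne').comp r h
  have d3 : HasDerivAt (fun x : ℝ => Real.log (3 - x)) (-(3-r)⁻¹) r := by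
    have h : HasDerivAt (fun x : ℝ => 3 - x) (-1) r := (hasDerivAt_id r).const_sub 3
    have := (Real.hasDerivAt_log hr3.ne').comp r h
    simpa [Function.comp_def] using this
  have := ((d1.const_mul (-(1/3) : ℝ)).add (d2.const_mul ((1/2) : ℝ))).sub
    (d3.const_mul ((1/6) : ℝ))
  refine this.congr_deriv ?_
  field_simp
  ring

lemma Gfun_strictMonoOn : StrictMonoOn Gfun (Ioo 1 3) := by
  apply strictMonoOn_of_deriv_pos (convex_Ioo 1 3)
  · intro x hx
    exact (Gfun_hasDerivAt hx.1 hx.2).continuousAt.continuousWithinAt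
  · rw [interior_Ioo]
    intro x hx
    rw [(Gfun_hasDerivAt hx.1 hx.2).deriv]
    obtain ⟨h1, h3⟩ := hx
    have : 0 < x * ((x-1)*(3-x)) :=
      mul_pos (by linarith) (mul_pos (by linarith) (by linarith))
    exact inv_pos.2 this

lemma Gfun_tendsto_bot : Tendsto Gfun (𝓝[>] (1:ℝ)) atBot := by
  have hsub : Tendsto (fun r : ℝ => r - 1) (𝓝[>] (1:ℝ)) (𝓝[>] (0:ℝ)) := by
    apply tendsto_nhdsWithin_of_tendsto_nhds_of_eventually_within
    · have h := (continuous_sub_right (1:ℝ)).tendsto 1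
      norm_num at h
      exact h.mono_left nhdsWithin_le_nhds
    · exact eventually_mem_nhdsWithin.mono fun r hr => mem_Ioi.2 (sub_pos.2 hr)
  have t2 : Tendsto (fun r : ℝ => (1/2) * Real.log (r - 1)) (𝓝[>] (1:ℝ)) atBot := by
    have := Real.tendsto_log_nhdsGT_zero.comp hsub
    exact Tendsto.const_mul_atBot (by norm_num) this
  have c1 : ContinuousAt (fun r : ℝ => -(1/3) * Real.log r - (1/6) * Real.log (3 - r)) 1 := by
    apply ContinuousAt.sub
    · exact (Real.continuousAt_log one_ne_zero).const_mul _
    · exact ((Real.continuousAt_log (by norm_num)).comp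
        ((continuous_const.sub continuous_id).continuousAt)).const_mul _
  have t1 : Tendsto (fun r : ℝ => -(1/3) * Real.log r - (1/6) * Real.log (3 - r))
      (𝓝[>] (1:ℝ)) (𝓝 (-(1/3) * Real.log 1 - (1/6) * Real.log (3 - 1))) :=
    c1.tendsto.mono_left nhdsWithin_le_nhds
  have h := t1.add_atBot t2
  refine h.congr fun r => ?_
  unfold Gfun; ring

lemma Gfun_tendsto_top : Tendsto Gfun (𝓝[<] (3:ℝ)) atTop := by
  have hsub : Tendsto (fun r : ℝ => 3 - r) (𝓝[<] (3:ℝ)) (𝓝[>] (0:ℝ)) := by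
    apply tendsto_nhdsWithin_of_tendsto_nhds_of_eventually_within
    · have h : Tendsto (fun r : ℝ => 3 - r) (𝓝 3) (𝓝 (3 - 3)) :=
        tendsto_const_nhds.sub tendsto_id
      norm_num at h
      exact h.mono_left nhdsWithin_le_nhds
    · exact eventually_mem_nhdsWithin.mono fun r hr => mem_Ioi.2 (sub_pos.2 hr)
  have t2 : Tendsto (fun r : ℝ => -(1/6) * Real.log (3 - r)) (𝓝[<] (3:ℝ)) atTop := by
    have h1 := Real.tendsto_log_nhdsGT_zero.comp hsub
    have h2 := Tendsto.const_mul_atBot (show (0:ℝ) < 1/6 by norm_num) h1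
    have h3 := tendsto_neg_atBot_atTop.comp h2
    refine h3.congr fun r => ?_
    simp only [Function.comp_apply]
    ring
  have c1 : ContinuousAt (fun r : ℝ => -(1/3) * Real.log r + (1/2) * Real.log (r - 1)) 3 := by
    apply ContinuousAt.add
    · exact ((Real.continuousAt_log (by norm_num)).const_mul _)
    · exact ((Real.continuousAt_log (by norm_num)).comp
        ((continuous_id.sub continuous_const).continuousAt)).const_mul _
  have t1 : Tendsto (fun r : ℝ => -(1/3) * Real.log r + (1/2) * Real.log (r - 1))
      (𝓝[<] (3:ℝ)) (𝓝 (-(1/3) * Real.log 3 + (1/2) * Real.log (3 - 1))) :=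
    c1.tendsto.mono_left nhdsWithin_le_nhds
  have h := t1.add_atTop t2
  refine h.congr fun r => ?_
  unfold Gfun; ring

lemma Gfun_surjOn : ∀ y : ℝ, ∃ r ∈ Ioo (1:ℝ) 3, Gfun r = y := by
  intro y
  have h13 : (1:ℝ) ∈ Ico (1:ℝ) 3 := ⟨le_refl _, by norm_num⟩
  have h31 : (3:ℝ) ∈ Ioc (1:ℝ) 3 := ⟨by norm_num, le_refl _⟩
  have e1 : ∀ᶠ r in 𝓝[>] (1:ℝ), Gfun r < y ∧ r ∈ Ioo (1:ℝ) 3 :=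
    (Gfun_tendsto_bot.eventually (eventually_lt_atBot y)).and
      (Ioo_mem_nhdsGT_of_mem h13)
  have e2 : ∀ᶠ r in 𝓝[<] (3:ℝ), y < Gfun r ∧ r ∈ Ioo (1:ℝ) 3 :=
    (Gfun_tendsto_top.eventually (eventually_gt_atTop y)).and
      (Ioo_mem_nhdsLT_of_mem h31)
  obtain ⟨r1, hr1y, hr1⟩ := e1.exists
  obtain ⟨r2, hr2y, hr2⟩ := e2.exists
  have h12 : r1 < r2 := by
    by_contra h
    push_neg at h
    have := Gfun_strictMonoOn.monotoneOn hr2 hr1 h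
    linarith
  have hcont : ContinuousOn Gfun (Icc r1 r2) := fun x hx =>
    (Gfun_hasDerivAt (lt_of_lt_of_le hr1.1 hx.1) (lt_of_le_of_lt hx.2 hr2.2)).continuousAt.continuousWithinAt
  have := intermediate_value_Icc h12.le hcont
  have hy : y ∈ Icc (Gfun r1) (Gfun r2) := ⟨hr1y.le, hr2y.le⟩
  obtain ⟨r, hr, hry⟩ := this hy
  exact ⟨r, ⟨lt_of_lt_of_le hr1.1 hr.1, lt_of_le_of_lt hr.2 hr2.2⟩, hry⟩

instance : Set.OrdConnected (Ioo (1:ℝ) 3) := Set.ordConnected_Ioo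

noncomputable def GIso : (Ioo (1:ℝ) 3) ≃o ℝ :=
  StrictMono.orderIsoOfSurjective (fun x => Gfun x)
    (fun a b hab => Gfun_strictMonoOn a.2 b.2 hab)
    (fun y => by
      obtain ⟨r, hr, hry⟩ := Gfun_surjOn y
      exact ⟨⟨r, hr⟩, hry⟩)

noncomputable def Hfun (y : ℝ) : ℝ := (GIso.symm y : ℝ)

lemma Hfun_mem (y : ℝ) : Hfun y ∈ Ioo (1:ℝ) 3 := (GIso.symm y).2

lemma Gfun_Hfun (y : ℝ) : Gfun (Hfun y) = y := by
  have h := GIso.apply_symm_apply y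
  rw [GIso] at h
  exact h

lemma Hfun_Gfun {r : ℝ} (hr : r ∈ Ioo (1:ℝ) 3) : Hfun (Gfun r) = r :=
  Gfun_strictMonoOn.injOn (Hfun_mem _) hr (Gfun_Hfun _)

lemma Hfun_strictMono : StrictMono Hfun :=
  fun a b h => GIso.symm.strictMono h

lemma Hfun_continuous : Continuous Hfun :=
  continuous_subtype_val.comp GIso.symm.continuous

lemma Hfun_hasDerivAt (y : ℝ) :
    HasDerivAt Hfun (Hfun y * ((Hfun y - 1) * (3 - Hfun y))) y := by
  obtain ⟨hm1, hm3⟩ := Hfun_mem y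
  have hpos : 0 < Hfun y * ((Hfun y - 1) * (3 - Hfun y)) :=
    mul_pos (by linarith) (mul_pos (by linarith) (by linarith))
  have h := HasDerivAt.of_local_left_inverse Hfun_continuous.continuousAt
    (Gfun_hasDerivAt hm1 hm3) (inv_ne_zero hpos.ne')
    (Filter.Eventually.of_forall Gfun_Hfun)
  simpa [inv_inv] using h

lemma Hfun_tendsto_atTop : Tendsto Hfun atTop (𝓝 3) := by
  rw [tendsto_order]
  constructor
  · intro a ha
    rcases le_or_gt a 1 with h | h
    · exact Eventually.of_forall fun y => lt_of_le_of_lt h (Hfun_mem y).1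
    · filter_upwards [eventually_gt_atTop (Gfun a)] with y hy
      have := Hfun_strictMono hy
      rwa [Hfun_Gfun ⟨h, ha⟩] at this
  · intro b hb
    exact Eventually.of_forall fun y => lt_trans (Hfun_mem y).2 hb

lemma Hfun_tendsto_atBot : Tendsto Hfun atBot (𝓝 1) := by
  rw [tendsto_order]
  constructor
  · intro a ha
    exact Eventually.of_forall fun y => lt_of_le_of_lt ha.le (Hfun_mem y).1
  · intro b hb
    rcases le_or_gt 3 b with h | h
    · exact Eventually.of_forall fun y => lt_of_lt_of_le (Hfun_mem y).2 h
    · filter_upwards [eventually_lt_atBot (Gfun b)] with y hy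
      have := Hfun_strictMono hy
      rwa [Hfun_Gfun ⟨hb, h⟩] at this

/-- (i) Every point of norm `1` or `3` is a zero of the vector field
`V(u) = (‖u‖ − 1)(3 − ‖u‖)·u`, so constant curves at such points solve
`u' = V(u)`; and (ii) every maximal solution of `u' = V(u)` with
`1 < ‖u(0)‖ < 3` is defined for all `t ∈ ℝ`, stays in the annulus
`1 < ‖u‖ < 3`, has constant direction `u/‖u‖`, has strictly increasing norm,
and its norm tends to `3` as `t → +∞` and to `1` as `t → −∞`. -/
theorem radialField_dynamics :
    (∀ u : EuclideanSpace ℝ (Fin 2), (‖u‖ = 1 ∨ ‖u‖ = 3) →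
      radialField u = 0 ∧
      ∀ t : ℝ, HasDerivAt (fun _ : ℝ => u) (radialField u) t) ∧
    (∀ (s : Set ℝ) (u : ℝ → EuclideanSpace ℝ (Fin 2)),
      IsOpen s → IsPreconnected s → (0 : ℝ) ∈ s →
      (∀ t ∈ s, HasDerivAt u (radialField (u t)) t) →
      1 < ‖u 0‖ → ‖u 0‖ < 3 →
      -- maximality: the solution admits no extension to a strictly larger
      -- open connected domain
      (∀ (s' : Set ℝ) (v : ℝ → EuclideanSpace ℝ (Fin 2)),
        IsOpen s' → IsPreconnected s' → s ⊆ s' →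
        (∀ t ∈ s', HasDerivAt v (radialField (v t)) t) →
        Set.EqOn u v s → s' = s) →
      s = Set.univ ∧
      (∀ t : ℝ, 1 < ‖u t‖ ∧ ‖u t‖ < 3) ∧
      (∀ t₁ t₂ : ℝ, (‖u t₁‖)⁻¹ • u t₁ = (‖u t₂‖)⁻¹ • u t₂) ∧
      StrictMono (fun t : ℝ => ‖u t‖) ∧
      Filter.Tendsto (fun t : ℝ => ‖u t‖) Filter.atTop (𝓝 3) ∧
      Filter.Tendsto (fun t : ℝ => ‖u t‖) Filter.atBot (𝓝 1)) := by
  constructor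
  · intro u hu
    have h0 : radialField u = 0 := by
      rcases hu with h | h <;> simp [radialField, h]
    exact ⟨h0, fun t => h0 ▸ hasDerivAt_const t u⟩
  · intro s u hso hsc hs0 hode h1 h3 hmax
    set r₀ := ‖u 0‖ with hr₀def
    have hr₀ : r₀ ∈ Ioo (1:ℝ) 3 := ⟨h1, h3⟩
    have hr₀pos : (0:ℝ) < r₀ := by linarith [hr₀.1]
    set c := Gfun r₀ with hcdef
    set ρ : ℝ → ℝ := fun t => Hfun (t + c) with hρdef
    set w : ℝ → EuclideanSpace ℝ (Fin 2) := fun t => (ρ t / r₀) • u 0 with hwdef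
    have hρmem : ∀ t, ρ t ∈ Ioo (1:ℝ) 3 := fun t => Hfun_mem _
    have hρpos : ∀ t, (0:ℝ) < ρ t := fun t => lt_trans one_pos (hρmem t).1
    have hρ0 : ρ 0 = r₀ := by
      simp only [hρdef, zero_add]
      exact Hfun_Gfun hr₀
    have hwnorm : ∀ t, ‖w t‖ = ρ t := by
      intro t
      simp only [hwdef, norm_smul, Real.norm_eq_abs,
        abs_of_pos (div_pos (hρpos t) hr₀pos)]
      rw [← hr₀def, div_mul_cancel₀ _ hr₀pos.ne']
    have hw0 : w 0 = u 0 := by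
      simp only [hwdef, hρ0, div_self hr₀pos.ne', one_smul]
    have hρderiv : ∀ t, HasDerivAt ρ (ρ t * ((ρ t - 1) * (3 - ρ t))) t := by
      intro t
      have hd : HasDerivAt (fun t : ℝ => t + c) 1 t := (hasDerivAt_id t).add_const c
      have := (Hfun_hasDerivAt (t + c)).comp t hd
      simpa [Function.comp_def] using this
    have hwderiv : ∀ t, HasDerivAt w (radialField (w t)) t := by
      intro t
      have := ((hρderiv t).div_const r₀).smul_const (u 0)
      refine this.congr_deriv ?_
      rw [radialField, hwnorm t, hwdef]
      rw [smul_smul]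
      congr 1
      field_simp
    -- uniqueness: u = w on s
    have huw : Set.EqOn u w s := by
      intro t ht
      have hIsub : uIcc (0:ℝ) t ⊆ s := (hsc.ordConnected).uIcc_subset hs0 ht
      obtain ⟨ε, hε, hsub⟩ :=
        (isCompact_uIcc (a := (0:ℝ)) (b := t)).exists_cthickening_subset_open hso hIsub
      set a := min 0 t with hadef
      set b := max 0 t with hbdef
      have hab : a ≤ b := min_le_max
      have ha0 : a ≤ 0 := min_le_left _ _
      have hb0 : 0 ≤ b := le_max_left _ _
      have hat : a ≤ t := min_le_right _ _
      have hbt : t ≤ b := le_max_right _ _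
      have huIcc : uIcc (0:ℝ) t = Icc a b := rfl
      have hIcc2 : Icc (a - ε) (b + ε) ⊆ s := by
        intro x hx
        apply hsub
        have hpmem : max a (min x b) ∈ uIcc (0:ℝ) t := by
          rw [huIcc]
          exact ⟨le_max_left _ _, max_le hab (min_le_right _ _)⟩
        refine mem_cthickening_of_dist_le x (max a (min x b)) ε _ hpmem ?_
        rw [Real.dist_eq, abs_le]
        rcases le_total x a with hxa | hxa
        · have h1 : min x b = x := min_eq_left (hxa.trans hab)
          rw [h1, max_eq_left hxa]
          constructor <;> [linarith [hx.1]; linarith]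
        · rcases le_total x b with hxb | hxb
          · rw [min_eq_left hxb, max_eq_right hxa]
            constructor <;> [linarith; linarith]
          · rw [min_eq_right hxb, max_eq_right hab]
            constructor <;> [linarith; linarith [hx.2]]
      have h0mem : (0:ℝ) ∈ Ioo (a - ε) (b + ε) := ⟨by linarith, by linarith⟩
      have htmem : t ∈ Icc (a - ε) (b + ε) := ⟨by linarith, by linarith⟩
      have hucont : ContinuousOn u (Icc (a - ε) (b + ε)) := fun x hx =>
        (hode x (hIcc2 hx)).continuousAt.continuousWithinAt
      obtain ⟨C, hC⟩ := (isCompact_Icc (a := a - ε) (b := b + ε)).exists_bound_of_continuousOn hucont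
      set R := max C 3 with hRdef
      have hR0 : (0:ℝ) ≤ R := le_trans (by norm_num) (le_max_right C 3)
      have key := ODE_solution_unique_of_mem_Icc
        (v := fun _ x => radialField x)
        (s := fun _ => Metric.closedBall (0 : EuclideanSpace ℝ (Fin 2)) R)
        (K := Real.toNNReal (3*R^2 + 8*R + 3))
        (fun _ _ => radialField_lipschitzOnWith R hR0)
        h0mem
        hucont
        (fun x hx => hode x (hIcc2 (Ioo_subset_Icc_self hx)))
        (fun x hx => by
          rw [mem_closedBall_zero_iff]
          exact le_trans (hC x (Ioo_subset_Icc_self hx)) (le_max_left C 3))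
        (fun x _ => (hwderiv x).continuousAt.continuousWithinAt)
        (fun x _ => hwderiv x)
        (fun x _ => by
          rw [mem_closedBall_zero_iff, hwnorm x]
          exact le_trans (hρmem x).2.le (le_max_right C 3))
        hw0.symm
      exact key htmem
    -- maximality gives s = univ
    have hsuniv : s = Set.univ :=
      (hmax Set.univ w isOpen_univ isPreconnected_univ (subset_univ s)
        (fun t _ => hwderiv t) huw).symm
    have hueq : ∀ t, u t = w t := fun t => huw (hsuniv ▸ mem_univ t)
    have hnorm : ∀ t, ‖u t‖ = ρ t := fun t => by rw [hueq t, hwnorm t]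
    have hnormfun : (fun t : ℝ => ‖u t‖) = fun t => Hfun (t + c) := funext hnorm
    refine ⟨hsuniv, ?_, ?_, ?_, ?_, ?_⟩
    · intro t
      rw [hnorm t]
      exact ⟨(hρmem t).1, (hρmem t).2⟩
    · intro t₁ t₂
      have key : ∀ t : ℝ, (‖u t‖)⁻¹ • u t = r₀⁻¹ • u 0 := by
        intro t
        rw [hueq t, hwnorm t, hwdef]
        rw [smul_smul]
        congr 1
        field_simp
        exact div_self (hρpos t).ne'
      rw [key t₁, key t₂]
    · rw [hnormfun]
      exact Hfun_strictMono.comp (fun x y hxy => by simpa using add_lt_add_right hxy c)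
    · rw [hnormfun]
      exact Hfun_tendsto_atTop.comp (tendsto_atTop_add_const_right _ c tendsto_id)
    · rw [hnormfun]
      exact Hfun_tendsto_atBot.comp (tendsto_atBot_add_const_right _ c tendsto_id)
end
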